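/- Let X be a nonnegative random variable with P(|X - E[X]| ≥ t) ≤ 2exp(-t/K₁) for all t ≥ 0, where K₁ > 0 and E[X] > 0. Then for all t ≥ 0, P(|√X - √(E[X])| ≥ t) ≤ 2exp(-t²/K₁). -/
import Mathlib


open MeasureTheory

/-- If a nonnegative random variable `X` with positive mean satisfies
`P(|X - E X| ≥ t) ≤ 2 exp (-t/K₁)` for all `t ≥ 0`, then for all `t ≥ 0`,
`P(|√X - √(E X)| ≥ t) ≤ 2 exp (-t²/K₁)`. -/
theorem sqrt_concentration_of_subexp {Ω : Type*} [MeasurableSpace Ω] (μ : Measure Ω)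
    [IsProbabilityMeasure μ] (X : Ω → ℝ) (hpos : ∀ ω, 0 ≤ X ω) (K₁ : ℝ) (hK : 0 < K₁)
    (hmean : 0 < ∫ ω, X ω ∂μ)
    (htail : ∀ t : ℝ, 0 ≤ t →
      μ {ω | t ≤ |X ω - ∫ ω', X ω' ∂μ|} ≤ ENNReal.ofReal (2 * Real.exp (-t / K₁))) :
    ∀ t : ℝ, 0 ≤ t →
      μ {ω | t ≤ |Real.sqrt (X ω) - Real.sqrt (∫ ω', X ω' ∂μ)|} ≤
        ENNReal.ofReal (2 * Real.exp (-t ^ 2 / K₁)) := by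
  intro t ht
  have key : {ω | t ≤ |Real.sqrt (X ω) - Real.sqrt (∫ ω', X ω' ∂μ)|} ⊆
      {ω | t ^ 2 ≤ |X ω - ∫ ω', X ω' ∂μ|} := by
    intro ω hω
    simp only [Set.mem_setOf_eq] at hω ⊢
    set m := ∫ ω', X ω' ∂μ with hm
    have hx : 0 ≤ X ω := hpos ω
    have hmn : (0:ℝ) ≤ m := hmean.le
    have hsx : Real.sqrt (X ω) ^ 2 = X ω := Real.sq_sqrt hx
    have hsm : Real.sqrt m ^ 2 = m := Real.sq_sqrt hmn
    have h1 : X ω - m = (Real.sqrt (X ω) - Real.sqrt m) * (Real.sqrt (X ω) + Real.sqrt m) := by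
      nlinarith [hsx, hsm]
    have h2 : |X ω - m| = |Real.sqrt (X ω) - Real.sqrt m| * (Real.sqrt (X ω) + Real.sqrt m) := by
      have : |Real.sqrt (X ω) + Real.sqrt m| = Real.sqrt (X ω) + Real.sqrt m :=
        abs_of_nonneg (by positivity)
      rw [h1, abs_mul, this]
    have h3 : |Real.sqrt (X ω) - Real.sqrt m| ≤ Real.sqrt (X ω) + Real.sqrt m := by
      have := abs_sub (Real.sqrt (X ω)) (Real.sqrt m)
      rw [abs_of_nonneg (Real.sqrt_nonneg _), abs_of_nonneg (Real.sqrt_nonneg _)] at this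
      exact this
    nlinarith [abs_nonneg (Real.sqrt (X ω) - Real.sqrt m)]
  calc μ {ω | t ≤ |Real.sqrt (X ω) - Real.sqrt (∫ ω', X ω' ∂μ)|}
      ≤ μ {ω | t ^ 2 ≤ |X ω - ∫ ω', X ω' ∂μ|} := measure_mono key
    _ ≤ ENNReal.ofReal (2 * Real.exp (-t ^ 2 / K₁)) := htail (t ^ 2) (sq_nonneg t)
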